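/- Let u⁺, u⁻, w, n ∈ ℝ² and suppose the jump of the normal component vanishes: (u⁺ − u⁻)·n = 0. Then ((u⁺ − u⁻)⊥ · n) · ((u⁺)⊥·w − (u⁻)⊥·w) = (w·n) · ‖u⁺ − u⁻‖², where ‖·‖ is the Euclidean norm. In the notation of jumps, with [u] := u⁺ − u⁻ and v continuous across the edge (v⁺ = v⁻ = w), this reads ([u⊥]·n)·[u⊥·v] = (w·n)·([u]·[u]). -/

import Mathlib

open scoped RealInnerProductSpace

/-- Clockwise rotation by π/2 of a vector in Euclidean ℝ²: `v⊥ = (v₂, −v₁)`. -/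
noncomputable def perp (v : EuclideanSpace ℝ (Fin 2)) : EuclideanSpace ℝ (Fin 2) :=
  (WithLp.equiv 2 (Fin 2 → ℝ)).symm ![v 1, -(v 0)]

/-! The normal jump `[u]·n` vanishes, so `n` has no component along `[u]`; expanding `n` and `w`
in the orthogonal basis `[u], [u]⊥` then reduces `([u]⊥·n)([u]⊥·w)` to `‖[u]‖² (n·w)`. -/

@[simp]
theorem perp_apply_zero (v : EuclideanSpace ℝ (Fin 2)) : perp v 0 = v 1 := rfl

@[simp]
theorem perp_apply_one (v : EuclideanSpace ℝ (Fin 2)) : perp v 1 = -v 0 := rfl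

theorem perp_sub (u v : EuclideanSpace ℝ (Fin 2)) : perp (u - v) = perp u - perp v := by
  ext i
  fin_cases i <;> simp [sub_eq_add_neg, add_comm]

theorem inner_perp_mul_inner_perp_add_inner_mul_inner (d a b : EuclideanSpace ℝ (Fin 2)) :
    ⟪perp d, a⟫ * ⟪perp d, b⟫ + ⟪d, a⟫ * ⟪d, b⟫ = ‖d‖ ^ 2 * ⟪a, b⟫ := by
  rw [← real_inner_self_eq_norm_sq]
  simp only [PiLp.inner_apply, RCLike.inner_apply, conj_trivial, Fin.sum_univ_two,
    perp_apply_zero, perp_apply_one]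
  ring

/-- The pointwise jump identity underlying the Lie derivative stabilisation:
if the jump of the normal component vanishes, `([u⊥]·n)·[u⊥·v] = (w·n)·‖[u]‖²`
for a continuous test field `v⁺ = v⁻ = w`. -/
theorem jump_identity (up um w n : EuclideanSpace ℝ (Fin 2))
    (h : ⟪up - um, n⟫ = (0 : ℝ)) :
    ⟪perp (up - um), n⟫ * (⟪perp up, w⟫ - ⟪perp um, w⟫)
      = ⟪w, n⟫ * ‖up - um‖ ^ 2 := by
  calc ⟪perp (up - um), n⟫ * (⟪perp up, w⟫ - ⟪perp um, w⟫)
      = ⟪perp (up - um), n⟫ * ⟪perp (up - um), w⟫ + ⟪up - um, n⟫ * ⟪up - um, w⟫ := by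
        rw [h, zero_mul, add_zero, perp_sub, inner_sub_left _ _ w]
    _ = ‖up - um‖ ^ 2 * ⟪n, w⟫ := inner_perp_mul_inner_perp_add_inner_mul_inner _ _ _
    _ = ⟪w, n⟫ * ‖up - um‖ ^ 2 := by rw [real_inner_comm, mul_comm]
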